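/- Let U = [[cos(π/p), -sin(π/p)],[sin(π/p), cos(π/p)]] and V_λ = [[cos(π/q), -λ sin(π/q)],[λ⁻¹ sin(π/q), cos(π/q)]]. Then tr[U,V_λ] - 2 = (λ - 1/λ)² sin²(π/p) sin²(π/q). -/

import Mathlib

/-!
For `A, B ∈ SL(2)` the trace of the commutator is Fricke's polynomial
`tr A² + tr B² + tr(AB)² - tr A tr B tr(AB) - 2`. Here `tr U = 2 cos(π/p)`,
`tr V = 2 cos(π/q)` and `tr(UV) = 2 cos(π/p) cos(π/q) - (λ + λ⁻¹) sin(π/p) sin(π/q)`, so the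
polynomial minus 2 collapses to `(λ + λ⁻¹)² s² t² - 4 (1 - cos²(π/p)) (1 - cos²(π/q))`
with `s = sin(π/p)`, `t = sin(π/q)`, which is `(λ - λ⁻¹)² s² t²`.
-/

open Matrix Real

theorem Matrix.trace_mul_mul_adjugate_mul_adjugate_fin_two {R : Type*} [CommRing R]
    (A B : Matrix (Fin 2) (Fin 2) R) :
    trace (A * B * adjugate A * adjugate B) =
      trace A ^ 2 * det B + trace B ^ 2 * det A + trace (A * B) ^ 2
        - trace A * trace B * trace (A * B) - 2 * det A * det B := by
  rw [eta_fin_two A, eta_fin_two B]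
  simp only [adjugate_fin_two_of, trace_fin_two_of, det_fin_two_of, mul_fin_two]
  ring

theorem Matrix.inv_eq_adjugate_of_det_eq_one {n R : Type*} [Fintype n] [DecidableEq n]
    [CommRing R] {A : Matrix n n R} (h : det A = 1) : A⁻¹ = adjugate A := by
  rw [inv_def, h, Ring.inverse_one, one_smul]

theorem Matrix.trace_commutator_fin_two_of_det_eq_one {R : Type*} [CommRing R]
    {A B : Matrix (Fin 2) (Fin 2) R} (hA : det A = 1) (hB : det B = 1) :
    trace (A * B * A⁻¹ * B⁻¹) =
      trace A ^ 2 + trace B ^ 2 + trace (A * B) ^ 2 - trace A * trace B * trace (A * B) - 2 := by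
  rw [inv_eq_adjugate_of_det_eq_one hA, inv_eq_adjugate_of_det_eq_one hB,
    trace_mul_mul_adjugate_mul_adjugate_fin_two, hA, hB]
  ring

theorem stmt_5_general (p q : ℝ) (l : ℂ) (hl : l ≠ 0) :
    letI U : Matrix (Fin 2) (Fin 2) ℂ :=
      !![(Real.cos (Real.pi / p) : ℂ), -(Real.sin (Real.pi / p) : ℂ);
         (Real.sin (Real.pi / p) : ℂ), (Real.cos (Real.pi / p) : ℂ)]
    letI V : Matrix (Fin 2) (Fin 2) ℂ :=
      !![(Real.cos (Real.pi / q) : ℂ), -l * (Real.sin (Real.pi / q) : ℂ);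
         l⁻¹ * (Real.sin (Real.pi / q) : ℂ), (Real.cos (Real.pi / q) : ℂ)]
    Matrix.trace (U * V * U⁻¹ * V⁻¹) - 2 =
      (l - 1 / l) ^ 2 * (Real.sin (Real.pi / p) : ℂ) ^ 2 * (Real.sin (Real.pi / q) : ℂ) ^ 2 := by
  have hp : (cos (π / p) : ℂ) ^ 2 + (sin (π / p) : ℂ) ^ 2 = 1 := by
    exact_mod_cast cos_sq_add_sin_sq (π / p)
  have hq : (cos (π / q) : ℂ) ^ 2 + (sin (π / q) : ℂ) ^ 2 = 1 := by
    exact_mod_cast cos_sq_add_sin_sq (π / q)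
  rw [trace_commutator_fin_two_of_det_eq_one]
  · simp only [mul_fin_two, trace_fin_two_of]
    field_simp
    linear_combination (4 * l ^ 2 * (1 - (cos (π / q) : ℂ) ^ 2)) * hp
      + 4 * l ^ 2 * (sin (π / p) : ℂ) ^ 2 * hq
  · rw [det_fin_two_of]
    linear_combination hp
  · rw [det_fin_two_of]
    field_simp
    linear_combination hq

theorem stmt_5 (p q : ℝ) (hp : 2 ≤ p) (hq : 2 ≤ q) (l : ℂ) (hl : l ≠ 0) :
    letI U : Matrix (Fin 2) (Fin 2) ℂ :=
      !![(Real.cos (Real.pi / p) : ℂ), -(Real.sin (Real.pi / p) : ℂ);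
         (Real.sin (Real.pi / p) : ℂ), (Real.cos (Real.pi / p) : ℂ)]
    letI V : Matrix (Fin 2) (Fin 2) ℂ :=
      !![(Real.cos (Real.pi / q) : ℂ), -l * (Real.sin (Real.pi / q) : ℂ);
         l⁻¹ * (Real.sin (Real.pi / q) : ℂ), (Real.cos (Real.pi / q) : ℂ)]
    Matrix.trace (U * V * U⁻¹ * V⁻¹) - 2 =
      (l - 1 / l) ^ 2 * (Real.sin (Real.pi / p) : ℂ) ^ 2 * (Real.sin (Real.pi / q) : ℂ) ^ 2 :=
  stmt_5_general p q l hl
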